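/- arXiv:2603.05055 — 2 statements merged into one kernel-verified Lean document; each statement's English description precedes it below -/
import Mathlib

section
/- Let O be any set of Boolean functions and PROP any finite set of propositional variables. Then: (1) PL_O[PROP] ≤_pc ML_{O∪{◇}}[{p}], and (2) PL_O[PROP] ≤_pc ML_{O∪{□}}[{p}], where the modal concept classes are evaluated over finite pointed Kripke models. -/
set_option maxHeartbeats 1000000

/-! ### Modal formulas -/

inductive MF : Type
  | var : ℕ → MF
  | neg : MF → MF
  | and : MF → MF → MF
  | or : MF → MF → MF
  | dia : MF → MF
  | box : MF → MF

namespace MF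

/-- Implication `φ → ψ`, as the abbreviation `¬φ ∨ ψ`. -/
def imp (φ ψ : MF) : MF := .or (.neg φ) ψ

/-- Bi-implication `φ ↔ ψ`. -/
def iff (φ ψ : MF) : MF := .and (φ.imp ψ) (ψ.imp φ)

/-- `⊥` abbreviates `p ∧ ¬p`. -/
def bot : MF := .and (.var 0) (.neg (.var 0))

/-- `⊤` abbreviates `p ∨ ¬p`. -/
def top : MF := .or (.var 0) (.neg (.var 0))

/-- A formula is purely propositional if it contains no modal operators. -/
def isProp : MF → Prop
  | .var _ => True
  | .neg φ => φ.isProp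
  | .and φ ψ => φ.isProp ∧ ψ.isProp
  | .or φ ψ => φ.isProp ∧ ψ.isProp
  | .dia _ => False
  | .box _ => False

/-- Boolean evaluation (meaningful for purely propositional formulas). -/
def propEval (v : ℕ → Bool) : MF → Bool
  | .var n => v n
  | .neg φ => !(propEval v φ)
  | .and φ ψ => propEval v φ && propEval v ψ
  | .or φ ψ => propEval v φ || propEval v ψ
  | .dia φ => propEval v φ
  | .box φ => propEval v φ

/-- Propositional tautologies. -/
def isTautology (φ : MF) : Prop := φ.isProp ∧ ∀ v, φ.propEval v = true

/-- Uniform substitution. -/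
def subst (σ : ℕ → MF) : MF → MF
  | .var n => σ n
  | .neg φ => .neg (φ.subst σ)
  | .and φ ψ => .and (φ.subst σ) (ψ.subst σ)
  | .or φ ψ => .or (φ.subst σ) (ψ.subst σ)
  | .dia φ => .dia (φ.subst σ)
  | .box φ => .box (φ.subst σ)

/-- The set of propositional variables occurring in a formula. -/
def vars : MF → Set ℕ
  | .var n => {n}
  | .neg φ => φ.vars
  | .and φ ψ => φ.vars ∪ ψ.vars
  | .or φ ψ => φ.vars ∪ ψ.vars
  | .dia φ => φ.vars
  | .box φ => φ.vars

/-- Kripke satisfaction. -/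
def sat {W : Type} (R : W → W → Prop) (V : ℕ → W → Prop) : MF → W → Prop
  | .var n, w => V n w
  | .neg φ, w => ¬ sat R V φ w
  | .and φ ψ, w => sat R V φ w ∧ sat R V ψ w
  | .or φ ψ, w => sat R V φ w ∨ sat R V ψ w
  | .dia φ, w => ∃ u, R w u ∧ sat R V φ u
  | .box φ, w => ∀ u, R w u → sat R V φ u

/-- `◇^n φ`. -/
def diaIter : ℕ → MF → MF
  | 0, φ => φ
  | n + 1, φ => .dia (diaIter n φ)

/-- `□^n φ`. -/
def boxIter : ℕ → MF → MF
  | 0, φ => φ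
  | n + 1, φ => .box (boxIter n φ)

/-- `◇^{≤n} φ`, the disjunction of `◇^k φ` for `0 ≤ k ≤ n`. -/
def diaLe : ℕ → MF → MF
  | 0, φ => φ
  | n + 1, φ => .or (diaLe n φ) (diaIter (n + 1) φ)

/-- An injective numeric encoding of modal formulas. -/
def encodeMF : MF → ℕ
  | .var n => Nat.pair 0 n
  | .neg φ => Nat.pair 1 φ.encodeMF
  | .and φ ψ => Nat.pair 2 (Nat.pair φ.encodeMF ψ.encodeMF)
  | .or φ ψ => Nat.pair 3 (Nat.pair φ.encodeMF ψ.encodeMF)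
  | .dia φ => Nat.pair 4 φ.encodeMF
  | .box φ => Nat.pair 5 φ.encodeMF

end MF

/-- A normal modal logic. -/
structure NormalLogic (Λ : Set MF) : Prop where
  taut : ∀ φ, φ.isTautology → φ ∈ Λ
  axK : ∀ φ ψ, ((MF.box (φ.imp ψ)).imp ((MF.box φ).imp (MF.box ψ))) ∈ Λ
  dual : ∀ φ, ((MF.dia φ).iff (MF.neg (MF.box (MF.neg φ)))) ∈ Λ
  mp : ∀ φ ψ, φ.imp ψ ∈ Λ → φ ∈ Λ → ψ ∈ Λ
  usubst : ∀ φ (σ : ℕ → MF), φ ∈ Λ → φ.subst σ ∈ Λ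
  nec : ∀ φ, φ ∈ Λ → MF.box φ ∈ Λ

/-- Validity on the frame `F_⊙` consisting of a single reflexive world. -/
def validOnReflPoint (φ : MF) : Prop :=
  ∀ V : ℕ → Prop, MF.sat (W := Unit) (fun _ _ => True) (fun n _ => V n) φ ()

/-- Validity on the frame `F_•` consisting of a single irreflexive world. -/
def validOnIrreflPoint (φ : MF) : Prop :=
  ∀ V : ℕ → Prop, MF.sat (W := Unit) (fun _ _ => False) (fun n _ => V n) φ ()

/-- Type A: `F_⊙ ⊨ Λ`. -/
def TypeA (Λ : Set MF) : Prop := ∀ φ ∈ Λ, validOnReflPoint φ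

/-- Type B: `F_• ⊨ Λ` and `Λ ⊢ □^n ⊥` for some `n ≥ 1`. -/
def TypeB (Λ : Set MF) : Prop :=
  (∀ φ ∈ Λ, validOnIrreflPoint φ) ∧ ∃ n ≥ 1, MF.boxIter n MF.bot ∈ Λ

/-- Type C: `F_• ⊨ Λ`, `Λ ⊬ □^n ⊥` for all `n ≥ 1`, `Λ ⊢ ◇^{≤n} □⊥` for some `n ≥ 1`. -/
def TypeC (Λ : Set MF) : Prop :=
  (∀ φ ∈ Λ, validOnIrreflPoint φ) ∧ (∀ n ≥ 1, MF.boxIter n MF.bot ∉ Λ) ∧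
    ∃ n ≥ 1, MF.diaLe n (MF.box MF.bot) ∈ Λ

/-- The (expansions of the) fragment `ML_Φ`: the smallest set of modal formulas containing
all propositional variables and closed under applying the connectives given by the formulas in
`Φ` (i.e., substituting fragment formulas into a member of `Φ`). -/
inductive MLFrag (Φ : Set MF) : MF → Prop
  | var (n : ℕ) : MLFrag Φ (MF.var n)
  | app (φ : MF) (hφ : φ ∈ Φ) (σ : ℕ → MF) (hσ : ∀ n, MLFrag Φ (σ n)) :
      MLFrag Φ (φ.subst σ)

/-- Expressive containment `ML_Φ ≼^Λ ML_Ψ`. -/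
def exprLe (Λ : Set MF) (Φ Ψ : Set MF) : Prop :=
  ∀ φ, MLFrag Φ φ → ∃ ψ, MLFrag Ψ ψ ∧ (φ.iff ψ) ∈ Λ

/-- Expressive equivalence with respect to `Λ`. -/
def exprEq (Λ : Set MF) (Φ Ψ : Set MF) : Prop := exprLe Λ Φ Ψ ∧ exprLe Λ Ψ Φ

/-- The minimal normal modal logic `K`: (semantically) the set of formulas valid in all
Kripke models. -/
def KLogic : Set MF :=
  {φ | ∀ (W : Type) (R : W → W → Prop) (V : ℕ → W → Prop) (w : W), MF.sat R V φ w}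

/-! ### Boolean functions and clones -/

/-- A Boolean function of positive arity. -/
structure BFun : Type where
  arity : ℕ
  arity_pos : 0 < arity
  eval : (Fin arity → Bool) → Bool

/-- A Boolean clone: a set of Boolean functions containing all projections and
closed under composition. -/
def IsClone (C : Set BFun) : Prop :=
  (∀ (n : ℕ) (hn : 0 < n) (k : Fin n), (⟨n, hn, fun v => v k⟩ : BFun) ∈ C) ∧
  (∀ f ∈ C, ∀ (m : ℕ) (hm : 0 < m) (g : Fin (BFun.arity f) → (Fin m → Bool) → Bool),
    (∀ i, (⟨m, hm, g i⟩ : BFun) ∈ C) →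
    (⟨m, hm, fun v => f.eval (fun i => g i v)⟩ : BFun) ∈ C)

/-- The clone generated by a set of Boolean functions. -/
def cloneGen (O : Set BFun) : Set BFun := ⋂₀ {C : Set BFun | IsClone C ∧ O ⊆ C}

/-- `O ≼ O'`: the clone generated by `O` is contained in the clone generated by `O'`. -/
def cloneLe (O O' : Set BFun) : Prop := cloneGen O ⊆ cloneGen O'

/-- The constant-true unary Boolean function. -/
def bfTop : BFun := ⟨1, Nat.one_pos, fun _ => true⟩
/-- The constant-false unary Boolean function. -/
def bfBot : BFun := ⟨1, Nat.one_pos, fun _ => false⟩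
/-- Negation. -/
def bfNot : BFun := ⟨1, Nat.one_pos, fun v => !(v 0)⟩
/-- Binary conjunction. -/
def bfAnd : BFun := ⟨2, Nat.succ_pos 1, fun v => v 0 && v 1⟩
/-- Binary disjunction. -/
def bfOr : BFun := ⟨2, Nat.succ_pos 1, fun v => v 0 || v 1⟩
/-- Ternary exclusive or `x ⊕ y ⊕ z`. -/
def bf3Xor : BFun := ⟨3, Nat.succ_pos 2, fun v => (v 0).xor ((v 1).xor (v 2))⟩
/-- `oxor(x,y,z) = x ∨ (y ⊕ z)`. -/
def bfOxor : BFun := ⟨3, Nat.succ_pos 2, fun v => v 0 || ((v 1).xor (v 2))⟩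
/-- `aimp(x,y,z) = x ∧ (y → z)`. -/
def bfAimp : BFun := ⟨3, Nat.succ_pos 2, fun v => v 0 && (!(v 1) || v 2)⟩

/-- The (purely propositional) formula `φ` defines the Boolean function `f`. -/
def definesBF (φ : MF) (f : BFun) : Prop :=
  φ.isProp ∧ ∀ v : ℕ → Bool, φ.propEval v = f.eval (fun i => v i.val)

/-- The generating set of formulas of the simple fragment `ML_{M ∪ O}`, where
`M ⊆ {◇,□}` is specified by the two Booleans `hd` (for `◇`) and `hb` (for `□`). -/
def MOgen (hd hb : Bool) (O : Set BFun) : Set MF :=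
  {φ | (hd = true ∧ φ = MF.dia (MF.var 0)) ∨ (hb = true ∧ φ = MF.box (MF.var 0)) ∨
    ∃ f ∈ O, definesBF φ f}

/-- `Clos^Λ_M(O)`: the set of Boolean functions `f` such that some propositional formula
defining `f` is `Λ`-equivalent to some `ML_{M ∪ O}`-formula. -/
def Clos (Λ : Set MF) (hd hb : Bool) (O : Set BFun) : Set BFun :=
  {f | ∃ φ ψ : MF, definesBF φ f ∧ MLFrag (MOgen hd hb O) ψ ∧ (φ.iff ψ) ∈ Λ}

/-- `β(Φ)`: the set of Boolean functions defined by propositional formulas in `Φ`. -/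
def betaBF (Φ : Set MF) : Set BFun := {f | ∃ φ ∈ Φ, definesBF φ f}

/-- A set of modal formulas is simple if each member is `◇x`, `□x`, or purely
propositional. -/
def IsSimpleSet (Φ : Set MF) : Prop :=
  ∀ φ ∈ Φ, (∃ n, φ = MF.dia (MF.var n)) ∨ (∃ n, φ = MF.box (MF.var n)) ∨ φ.isProp

/-- `Φ` is `M`-simple (with `M` given by `hd`, `hb`): simple, and the modal operators
among its members are exactly those in `M`. -/
def IsMSimpleSet (hd hb : Bool) (Φ : Set MF) : Prop :=
  IsSimpleSet Φ ∧ ((∃ n, MF.dia (MF.var n) ∈ Φ) ↔ hd = true) ∧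
    ((∃ n, MF.box (MF.var n) ∈ Φ) ↔ hb = true)

/-! ### Propositional fragments `PL_O` -/

/-- Formulas of the propositional fragment `PL_O`. -/
inductive PLF (O : Set BFun) : Type
  | var : ℕ → PLF O
  | app : (f : BFun) → f ∈ O → (Fin f.arity → PLF O) → PLF O

namespace PLF

variable {O : Set BFun}

/-- Evaluation of a `PL_O`-formula under a truth assignment. -/
def eval (v : ℕ → Bool) : PLF O → Bool
  | .var n => v n
  | .app f _ args => f.eval (fun i => (args i).eval v)

/-- The variables occurring in a `PL_O`-formula. -/
def pvars : PLF O → Set ℕ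
  | .var n => {n}
  | .app _ _ args => ⋃ i, (args i).pvars

/-- The set of subformulas of a `PL_O`-formula. -/
def subf : PLF O → Set (PLF O)
  | .var n => {PLF.var n}
  | .app f h args => insert (PLF.app f h args) (⋃ i, (args i).subf)

/-- `|φ|_dag`: the number of distinct subformulas. -/
noncomputable def dagSize (φ : PLF O) : ℕ := φ.subf.ncard

/-- Equivalence of propositional formulas. -/
def equivPLF (φ ψ : PLF O) : Prop := ∀ v, φ.eval v = ψ.eval v

/-- `φ` fits the labeled example `(V, lab)`. -/
def fits (φ : PLF O) (e : (ℕ → Bool) × Bool) : Prop := φ.eval e.1 = e.2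

end PLF

/-- `E` uniquely characterizes `φ` with respect to the class `L` of formulas. -/
def uniqCharPL {O : Set BFun} (φ : PLF O) (L : Set (PLF O))
    (E : Set ((ℕ → Bool) × Bool)) : Prop :=
  (∀ e ∈ E, φ.fits e) ∧ ∀ ψ ∈ L, (∀ e ∈ E, ψ.fits e) → φ.equivPLF ψ

/-! ### Concept classes and PC-reductions -/

/-- A concept `c` fits the labeled example `(e, lab)`. -/
def ccFits {C : Type*} {E : Type*} (l : C → Set E) (c : C) (e : E × Bool) : Prop :=
  e.1 ∈ l c ↔ e.2 = true

/-- `S` uniquely characterizes the concept `c` within the concept class given by `l`. -/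
def ccUniqChar {C : Type*} {E : Type*} (l : C → Set E) (c : C) (S : Set (E × Bool)) : Prop :=
  (∀ e ∈ S, ccFits l c e) ∧ ∀ c', (∀ e ∈ S, ccFits l c' e) → l c' = l c

/-- A PC-reduction between concept classes. -/
structure PCRed {C1 : Type*} {E1 : Type*} {C2 : Type*} {E2 : Type*}
    (l1 : C1 → Set E1) (l2 : C2 → Set E2) where
  fc : C1 → C2
  he : E1 → E2
  cond1 : ∀ c e, e ∈ l1 c ↔ he e ∈ l2 (fc c)
  cond2 : ∀ e : E2, (∀ c, e ∈ l2 (fc c)) ∨ (∀ c, e ∉ l2 (fc c)) ∨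
    ∃ e' : E1, {c | e ∈ l2 (fc c)} = {c | e' ∈ l1 c}

/-- Extend an assignment on `PROP` to all variables (by `false` elsewhere). -/
def extAssign (PROP : Finset ℕ) (v : {x // x ∈ PROP} → Bool) : ℕ → Bool :=
  fun n => if h : n ∈ PROP then v ⟨n, h⟩ else false

/-- The concept class `PL_O[PROP]`: concepts are `PL_O`-formulas with variables in `PROP`,
examples are truth assignments on `PROP`. -/
def plSem (O : Set BFun) (PROP : Finset ℕ) :
    {φ : PLF O // φ.pvars ⊆ ↑PROP} → Set ({x // x ∈ PROP} → Bool) :=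
  fun φ => {v | φ.1.eval (extAssign PROP v) = true}

/-! ### Simple modal fragments as syntax, and finite pointed Kripke models -/

/-- Formulas of the simple modal fragment `ML_{M ∪ O}` (as a syntax): Boolean connectives
from `O`, plus `◇` if `hd` and `□` if `hb`. -/
inductive MLF (O : Set BFun) (hd hb : Bool) : Type
  | var : ℕ → MLF O hd hb
  | app : (f : BFun) → f ∈ O → (Fin f.arity → MLF O hd hb) → MLF O hd hb
  | dia : hd = true → MLF O hd hb → MLF O hd hb
  | box : hb = true → MLF O hd hb → MLF O hd hb

/-- Propositional application of a Boolean function to propositions. -/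
def BFun.evalP (f : BFun) (P : Fin f.arity → Prop) : Prop :=
  f.eval (fun i => @decide (P i) (Classical.propDecidable _)) = true

namespace MLF

variable {O : Set BFun} {hd hb : Bool}

/-- Kripke satisfaction for simple-fragment formulas. -/
def msat {W : Type} (R : W → W → Prop) (V : ℕ → W → Prop) :
    MLF O hd hb → W → Prop
  | .var n, w => V n w
  | .app f _ args, w => f.evalP (fun i => msat R V (args i) w)
  | .dia _ φ, w => ∃ u, R w u ∧ msat R V φ u
  | .box _ φ, w => ∀ u, R w u → msat R V φ u

/-- Variables of a simple-fragment formula. -/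
def mvars : MLF O hd hb → Set ℕ
  | .var n => {n}
  | .app _ _ args => ⋃ i, (args i).mvars
  | .dia _ φ => φ.mvars
  | .box _ φ => φ.mvars

end MLF

/-- A finite pointed Kripke model. -/
structure FPModel : Type 1 where
  W : Type
  fin : Finite W
  R : W → W → Prop
  V : ℕ → W → Prop
  pt : W

/-- The concept class `ML_{O,∘}[{p}]` (with `p` the variable `0`): concepts are
simple-fragment formulas over the single variable `p`, examples are finite pointed
Kripke models. -/
def mlSem (O : Set BFun) (hd hb : Bool) :
    {φ : MLF O hd hb // φ.mvars ⊆ {0}} → Set FPModel :=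
  fun φ => {M | MLF.msat M.R M.V φ.1 M.pt}

/-- Satisfaction of a modal formula in a finite pointed Kripke model. -/
def msatMF (M : FPModel) (φ : MF) : Prop := MF.sat M.R M.V φ M.pt

/-- A modal formula fits a labeled example (a finite pointed model with a label). -/
def fitsMF (φ : MF) (e : FPModel × Bool) : Prop := msatMF e.1 φ ↔ e.2 = true

/-- `K`-equivalence of modal formulas: truth at the same worlds of all Kripke models. -/
def KequivMF (φ ψ : MF) : Prop :=
  ∀ (W : Type) (R : W → W → Prop) (V : ℕ → W → Prop) (w : W),
    MF.sat R V φ w ↔ MF.sat R V ψ w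

/-- `E` uniquely characterizes `φ` relative to the fragment `L` (with respect to `K`). -/
def uniqCharMF (φ : MF) (L : Set MF) (E : Set (FPModel × Bool)) : Prop :=
  (∀ e ∈ E, fitsMF φ e) ∧ ∀ ψ ∈ L, (∀ e ∈ E, fitsMF ψ e) → KequivMF φ ψ

/-- `ML_Φ[P]`: the fragment generated by `Φ`, restricted to variables in `P`. -/
def fragSimple (Φ : Set MF) (P : Set ℕ) : Set MF :=
  {φ | MLFrag Φ φ ∧ φ.vars ⊆ P}

/-- `ML_{M∪O}[P]`. -/
def fragMO (hd hb : Bool) (O : Set BFun) (P : Set ℕ) : Set MF :=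
  fragSimple (MOgen hd hb O) P

/-- For a simple set `Φ`: the modal operators of `Φ` are among those specified by
`hd`, `hb`, and `β(Φ)` is contained in the clone generated by `O`. -/
def simpleLeOps (Φ : Set MF) (O : Set BFun) (hd hb : Bool) : Prop :=
  ((∃ n, MF.dia (MF.var n) ∈ Φ) → hd = true) ∧
  ((∃ n, MF.box (MF.var n) ∈ Φ) → hb = true) ∧
  cloneGen (betaBF Φ) ⊆ cloneGen O

/-- Decoding of a natural number as a labeled example (a finite pointed Kripke model with
a Boolean label). -/
def decodeEx (c : ℕ) : FPModel × Bool :=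
  match Denumerable.ofNat (ℕ × List (ℕ × ℕ) × List (ℕ × ℕ) × ℕ × ℕ) c with
  | (n, edges, val, pt, b) =>
    (⟨Fin (n + 1), inferInstance,
      fun u v => (u.val, v.val) ∈ edges,
      fun k w => (k, w.val) ∈ val,
      ⟨pt % (n + 1), Nat.mod_lt pt (Nat.succ_pos n)⟩⟩, b % 2 == 1)

/-! A variable of `PROP`, the `i`-th in some enumeration, is translated to `◇^{i+1} p`
(resp. `□^{i+1} p`), and an assignment to the cycle `0 → 1 → ⋯ → |PROP| → 0` in which `p`
holds at world `i + 1` iff the `i`-th variable is true. On a frame where every world has exactly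
one successor `◇` and `□` coincide, so the translation is exact on these models. Conversely, a
pointed model `M` is sent back to the assignment making `x` true iff `M` satisfies the
translation of `x`, which is what condition (ii) of a PC-reduction asks for. -/

namespace PLF

variable {O : Set BFun} {hd hb : Bool}

def toMLF (τ : ℕ → MLF O hd hb) : PLF O → MLF O hd hb
  | .var n => τ n
  | .app f hf args => .app f hf fun i => (args i).toMLF τ

theorem mvars_toMLF_subset {τ : ℕ → MLF O hd hb} {S : Set ℕ} (hτ : ∀ n, (τ n).mvars ⊆ S) :
    ∀ φ : PLF O, (φ.toMLF τ).mvars ⊆ S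
  | .var n => hτ n
  | .app _ _ args => Set.iUnion_subset fun i => mvars_toMLF_subset hτ (args i)

theorem msat_toMLF_iff {W : Type} {R : W → W → Prop} {V : ℕ → W → Prop} {w : W}
    {τ : ℕ → MLF O hd hb} {a : ℕ → Bool} :
    ∀ φ : PLF O, (∀ n ∈ φ.pvars, MLF.msat R V (τ n) w ↔ a n = true) →
      (MLF.msat R V (φ.toMLF τ) w ↔ φ.eval a = true)
  | .var n, h => h n rfl
  | .app f _ args, h => by
    classical
    have hargs : ∀ i, (args i).eval a = @decide (MLF.msat R V ((args i).toMLF τ) w)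
        (Classical.propDecidable _) := fun i => by
      rw [Bool.eq_iff_iff, decide_eq_true_iff]
      exact (msat_toMLF_iff (args i) fun n hn => h n (Set.mem_iUnion.2 ⟨i, hn⟩)).symm
    simp only [toMLF, MLF.msat, BFun.evalP, eval, hargs]

end PLF

namespace MLF

variable {O : Set BFun} {hd hb : Bool}

def EvalsAtSuccessor (D : MLF O hd hb → MLF O hd hb) : Prop :=
  ∀ (W : Type) (R : W → W → Prop) (V : ℕ → W → Prop) (s : W → W),
    (∀ w u, R w u ↔ u = s w) → ∀ φ w, msat R V (D φ) w ↔ msat R V φ (s w)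

theorem evalsAtSuccessor_dia (h : hd = true) : EvalsAtSuccessor (O := O) (hb := hb) (.dia h) :=
  fun _ _ _ _ hR _ _ => by simp only [msat, hR, exists_eq_left]

theorem evalsAtSuccessor_box (h : hb = true) : EvalsAtSuccessor (O := O) (hd := hd) (.box h) :=
  fun _ _ _ _ hR _ _ => by simp only [msat, hR, forall_eq]

theorem EvalsAtSuccessor.msat_iterate {D : MLF O hd hb → MLF O hd hb}
    (hD : EvalsAtSuccessor D) {W : Type} {R : W → W → Prop} (V : ℕ → W → Prop) {s : W → W}
    (hR : ∀ w u, R w u ↔ u = s w) (m : ℕ) (φ : MLF O hd hb) (w : W) :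
    msat R V (D^[m] φ) w ↔ msat R V φ (s^[m] w) := by
  induction m generalizing w with
  | zero => rfl
  | succ m ih => rw [Function.iterate_succ_apply', hD W R V s hR, ih]; rfl

end MLF

theorem Fin.val_iterate_add_one_zero {n m : ℕ} (hm : m ≤ n) :
    ((· + 1 : Fin (n + 1) → Fin (n + 1))^[m] 0).val = m := by
  induction m with
  | zero => rfl
  | succ m ih =>
    rw [Function.iterate_succ_apply', Fin.val_add_one_of_lt' (by rw [ih (by omega)]; omega),
      ih (by omega)]

def cycleModel {k : ℕ} (a : Fin k → Bool) : FPModel where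
  W := Fin (k + 1)
  fin := inferInstance
  R i j := j = i + 1
  V _ j := ∃ i : Fin k, j = i.succ ∧ a i = true
  pt := 0

theorem cycleModel_msat_iterate_var {O : Set BFun} {hd hb : Bool} {k : ℕ} (a : Fin k → Bool)
    {D : MLF O hd hb → MLF O hd hb} (hD : MLF.EvalsAtSuccessor D) (i : Fin k) :
    MLF.msat (cycleModel a).R (cycleModel a).V (D^[i + 1] (.var 0)) (cycleModel a).pt ↔
      a i = true := by
  have hsucc : (· + 1 : Fin (k + 1) → Fin (k + 1))^[i + 1] 0 = i.succ :=
    Fin.ext (Fin.val_iterate_add_one_zero i.isLt)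
  refine (hD.msat_iterate (W := Fin (k + 1)) (s := (· + 1)) _ (fun _ _ => Iff.rfl) _ _ _).trans ?_
  change (∃ j : Fin k, (· + 1 : Fin (k + 1) → Fin (k + 1))^[i + 1] 0 = j.succ ∧ a j = true) ↔ _
  rw [hsucc]
  simp only [Fin.succ_inj, exists_eq_left']

def PCRed.ofToMLF {O : Set BFun} {hd hb : Bool} (PROP : Finset ℕ) (τ : ℕ → MLF O hd hb)
    (hτ : ∀ n, (τ n).mvars ⊆ {0}) (model : ({x // x ∈ PROP} → Bool) → FPModel)
    (hmodel : ∀ v n (hn : n ∈ PROP),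
      MLF.msat (model v).R (model v).V (τ n) (model v).pt ↔ v ⟨n, hn⟩ = true) :
    PCRed (plSem O PROP) (mlSem O hd hb) where
  fc φ := ⟨φ.1.toMLF τ, PLF.mvars_toMLF_subset hτ φ.1⟩
  he := model
  cond1 φ v := by
    refine (PLF.msat_toMLF_iff φ.1 fun n hn => ?_).symm
    have hn : n ∈ PROP := φ.2 hn
    rw [hmodel v n hn, extAssign, dif_pos hn]
  cond2 M := by
    classical
    refine Or.inr <| Or.inr ⟨fun x => decide (MLF.msat M.R M.V (τ x) M.pt), ?_⟩
    ext φ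
    refine PLF.msat_toMLF_iff φ.1 fun n hn => ?_
    have hn : n ∈ PROP := φ.2 hn
    rw [extAssign, dif_pos hn, decide_eq_true_iff]

theorem nonempty_pcRed_of_evalsAtSuccessor {O : Set BFun} {hd hb : Bool} (PROP : Finset ℕ)
    {D : MLF O hd hb → MLF O hd hb} (hD : MLF.EvalsAtSuccessor D)
    (hDvars : ∀ φ, (D φ).mvars = φ.mvars) :
    Nonempty (PCRed (plSem O PROP) (mlSem O hd hb)) := by
  let e := PROP.equivFin
  let idx : ℕ → ℕ := fun n => if hn : n ∈ PROP then e ⟨n, hn⟩ else 0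
  have hvars : ∀ m, (D^[m] (.var 0)).mvars ⊆ {0} := fun m =>
    (Set.MapsTo.iterate (f := D) (s := {φ | φ.mvars ⊆ {0}})
      (fun φ hφ => (hDvars φ).trans_subset hφ) m) fun _ => id
  refine ⟨PCRed.ofToMLF PROP (fun n => D^[idx n + 1] (.var 0)) (fun n => hvars _)
    (fun v => cycleModel (v ∘ e.symm)) fun v n hn => ?_⟩
  have := cycleModel_msat_iterate_var (v ∘ e.symm) hD (e ⟨n, hn⟩)
  simpa only [idx, dif_pos hn, Function.comp_apply, Equiv.symm_apply_apply] using this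

theorem stmt16 (O : Set BFun) (PROP : Finset ℕ) :
    Nonempty (PCRed (plSem O PROP) (mlSem O true false)) ∧
    Nonempty (PCRed (plSem O PROP) (mlSem O false true)) :=
  ⟨nonempty_pcRed_of_evalsAtSuccessor PROP (MLF.evalsAtSuccessor_dia rfl) fun _ => rfl,
    nonempty_pcRed_of_evalsAtSuccessor PROP (MLF.evalsAtSuccessor_box rfl) fun _ => rfl⟩
end

section
/- In each of the six modal fragments ML_{3XOR,◇}[{p}], ML_{3XOR,□}[{p}], ML_{oxor,◇}[{p}], ML_{oxor,□}[{p}], ML_{aimp,◇}[{p}], and ML_{aimp,□}[{p}], the atomic formula p cannot be uniquely characterized by any finite set of labeled examples (over finite pointed Kripke models, with respect to the logic K). Consequently, none of these fragments admits finite characterizations. -/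
set_option maxHeartbeats 1000000

/-!
The modal operator `op ∈ {◇, □}` acts on the valuations of a finite model, which form a finite
set, so the truth sets of `p, op p, op² p, …` are eventually periodic; for finitely many examples
there is therefore one `N ≥ 1` such that `op^N p` and `op^{2N} p` agree at every example. Each
of the three connectives `f` satisfies `f(x, y, y) = x`, so `f(p, op^N p, op^{2N} p)` fits every
example that `p` fits. It is not `K`-equivalent to `p`: on the successor chain `0 → 1 → 2 → ⋯`
the three arguments read off the valuation at the independent positions `0`, `N` and `2N`,
and `f(x, y, z) ≠ x` for suitable `x, y, z`.
-/

open Function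

theorem Function.exists_pos_isPeriodicPt_iterate {α : Type*} [Finite α] (f : α → α) (x : α) :
    ∃ m, 0 < m ∧ IsPeriodicPt f m (f^[m] x) := by
  obtain ⟨a, b, hab, heq⟩ := Finite.exists_ne_map_eq_of_infinite fun n => f^[n] x
  wlog hlt : a < b generalizing a b
  · exact this b a hab.symm heq.symm (by omega)
  have hper : IsPeriodicPt f (b - a) (f^[a] x) := by
    change f^[b - a] (f^[a] x) = f^[a] x
    rw [← iterate_add_apply, Nat.sub_add_cancel hlt.le]
    exact heq.symm
  obtain ⟨k, hk⟩ : ∃ k, (a + 1) * (b - a) = a + k :=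
    Nat.exists_eq_add_of_le (a.le_succ.trans (Nat.le_mul_of_pos_right _ (by omega)))
  refine ⟨(a + 1) * (b - a), Nat.mul_pos a.succ_pos (by omega), ?_⟩
  have hpt : f^[(a + 1) * (b - a)] x = f^[k] (f^[a] x) := by
    rw [hk, add_comm, iterate_add_apply]
  rw [hpt]
  exact (hper.apply_iterate k).const_mul (a + 1)

theorem Function.IsPeriodicPt.iterate_of_dvd {α : Type*} {f : α → α} {x : α} {m n : ℕ}
    (h : IsPeriodicPt f m (f^[m] x)) (hmn : m ∣ n) (hn : 0 < n) :
    IsPeriodicPt f n (f^[n] x) := by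
  obtain ⟨k, rfl⟩ := hmn
  obtain ⟨j, rfl⟩ : ∃ j, k = j + 1 := Nat.exists_eq_succ_of_ne_zero (by rintro rfl; simp at hn)
  have hpt : f^[m * (j + 1)] x = f^[m * j] (f^[m] x) := by
    rw [← iterate_add_apply, mul_add_one]
  rw [hpt]
  exact (h.apply_iterate (m * j)).mul_const (j + 1)

namespace MF

variable {W : Type} {R : W → W → Prop} {V : ℕ → W → Prop}

theorem sat_subst (φ : MF) (σ : ℕ → MF) (w : W) :
    sat R V (φ.subst σ) w ↔ sat R (fun n => sat R V (σ n)) φ w := by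
  induction φ generalizing w with
  | var n => rfl
  | neg φ ih => exact not_congr (ih w)
  | and φ ψ ih₁ ih₂ => exact and_congr (ih₁ w) (ih₂ w)
  | or φ ψ ih₁ ih₂ => exact or_congr (ih₁ w) (ih₂ w)
  | dia φ ih => exact exists_congr fun u => and_congr_right' (ih u)
  | box φ ih => exact forall_congr' fun u => imp_congr_right fun _ => ih u

theorem sat_iff_propEval {φ : MF} (hφ : φ.isProp) {w : W} {v : ℕ → Bool}
    (hv : ∀ n, V n w ↔ v n = true) : sat R V φ w ↔ φ.propEval v = true := by
  induction φ with
  | var n => exact hv n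
  | neg φ ih => simp [sat, propEval, ih hφ]
  | and φ ψ ih₁ ih₂ => simp [sat, propEval, ih₁ hφ.1, ih₂ hφ.2]
  | or φ ψ ih₁ ih₂ => simp [sat, propEval, ih₁ hφ.1, ih₂ hφ.2]
  | dia φ => exact hφ.elim
  | box φ => exact hφ.elim

theorem vars_subst_subset {φ : MF} {σ : ℕ → MF} {P : Set ℕ} (h : ∀ n, (σ n).vars ⊆ P) :
    (φ.subst σ).vars ⊆ P := by
  induction φ with
  | var n => exact h n
  | neg φ ih => exact ih
  | and φ ψ ih₁ ih₂ => exact Set.union_subset ih₁ ih₂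
  | or φ ψ ih₁ ih₂ => exact Set.union_subset ih₁ ih₂
  | dia φ ih => exact ih
  | box φ ih => exact ih

def modal : Bool → MF → MF
  | true => dia
  | false => box

def modalSem (R : W → W → Prop) : Bool → (W → Prop) → W → Prop
  | true, A, w => ∃ u, R w u ∧ A u
  | false, A, w => ∀ u, R w u → A u

theorem sat_modal (d : Bool) (φ : MF) : sat R V (modal d φ) = modalSem R d (sat R V φ) := by
  cases d <;> rfl

theorem sat_modal_iterate (d : Bool) (n : ℕ) (φ : MF) :
    sat R V ((modal d)^[n] φ) = (modalSem R d)^[n] (sat R V φ) := by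
  induction n with
  | zero => rfl
  | succ n ih => rw [iterate_succ_apply', iterate_succ_apply', sat_modal, ih]

theorem modalSem_succ (d : Bool) (A : ℕ → Prop) :
    modalSem (fun a b => b = a + 1) d A = fun k => A (k + 1) := by
  funext k
  cases d <;> simp [modalSem]

theorem sat_modal_iterate_succ {V : ℕ → ℕ → Prop} (d : Bool) (n : ℕ) (φ : MF) (k : ℕ) :
    sat (fun a b => b = a + 1) V ((modal d)^[n] φ) k ↔
      sat (fun a b => b = a + 1) V φ (k + n) := by
  induction n generalizing k with
  | zero => rfl
  | succ n ih =>
    rw [iterate_succ_apply', sat_modal, modalSem_succ]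
    exact (ih (k + 1)).trans (by rw [Nat.add_right_comm]; rfl)

theorem vars_modal_iterate (d : Bool) (n : ℕ) (φ : MF) : ((modal d)^[n] φ).vars = φ.vars := by
  induction n with
  | zero => rfl
  | succ n ih =>
    rw [iterate_succ_apply', ← ih]
    cases d <;> rfl

end MF

open MF

theorem MLFrag.modal_iterate {Φ : Set MF} {d : Bool} (hd : modal d (MF.var 0) ∈ Φ) {φ : MF}
    (hφ : MLFrag Φ φ) (n : ℕ) : MLFrag Φ ((modal d)^[n] φ) := by
  induction n with
  | zero => exact hφ
  | succ n ih =>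
    rw [iterate_succ_apply']
    have h := MLFrag.app _ hd (fun _ => (modal d)^[n] φ) fun _ => ih
    cases d <;> exact h

theorem exists_sat_modal_iterate_stable (d : Bool) (φ : MF) {S : Set FPModel}
    (hS : S.Finite) :
    ∃ N, 0 < N ∧ ∀ M ∈ S,
      sat M.R M.V ((modal d)^[N] ((modal d)^[N] φ)) = sat M.R M.V ((modal d)^[N] φ) := by
  have hper : ∀ M : FPModel, ∃ m, 0 < m ∧
      IsPeriodicPt (modalSem M.R d) m ((modalSem M.R d)^[m] (sat M.R M.V φ)) := fun M =>
    have := M.fin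
    exists_pos_isPeriodicPt_iterate _ _
  choose m hm_pos hm using hper
  refine ⟨∏ M ∈ hS.toFinset, m M, Finset.prod_pos fun M _ => hm_pos M, fun M hM => ?_⟩
  rw [sat_modal_iterate, sat_modal_iterate]
  exact ((hm M).iterate_of_dvd (Finset.dvd_prod_of_mem m (hS.mem_toFinset.mpr hM))
    (Finset.prod_pos fun M _ => hm_pos M)).eq

def assign3 {α : Type*} (a b c : α) : ℕ → α :=
  fun n => if n = 1 then b else if n = 2 then c else a

theorem sat_subst_assign3 {W : Type} {R : W → W → Prop} {V : ℕ → W → Prop} {φ : MF}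
    (hφ : φ.isProp) {A B : MF} {w : W} {x y z : Bool} (hx : V 0 w ↔ x = true)
    (hy : sat R V A w ↔ y = true) (hz : sat R V B w ↔ z = true) :
    sat R V (φ.subst (assign3 (var 0) A B)) w ↔ φ.propEval (assign3 x y z) = true := by
  rw [sat_subst]
  refine sat_iff_propEval hφ fun n => ?_
  unfold assign3
  split_ifs
  exacts [hy, hz, hx]

theorem not_KequivMF_var_subst_assign3 {φ : MF} (hφ : φ.isProp)
    (hcex : ∃ x y z, φ.propEval (assign3 x y z) ≠ x) (d : Bool) {N : ℕ} (hN : 0 < N) :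
    ¬ KequivMF (var 0) (φ.subst (assign3 (var 0) ((modal d)^[N] (var 0))
      ((modal d)^[N] ((modal d)^[N] (var 0))))) := by
  obtain ⟨x, y, z, hxyz⟩ := hcex
  intro hequiv
  let c : ℕ → Bool := fun k => if k = 0 then x else if k = N then y else z
  have hx : c 0 = x := if_pos rfl
  have hy : c N = y := by simp [c, hN.ne']
  have hz : c (N + N) = z := by simp only [c]; rw [if_neg (by omega), if_neg (by omega)]
  have h := hequiv ℕ (fun a b => b = a + 1) (fun _ k => c k = true) 0
  rw [sat_subst_assign3 hφ (x := x) (y := y) (z := z) (by rw [← hx])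
    (by rw [sat_modal_iterate_succ, zero_add, ← hy]; rfl)
    (by rw [sat_modal_iterate_succ, sat_modal_iterate_succ, zero_add, ← hz]; rfl)] at h
  exact hxyz (Bool.eq_iff_iff.mpr (h.symm.trans (by rw [← hx]; rfl)))

theorem not_exists_finite_uniqCharMF_var {Φ : Set MF} {d : Bool} (hd : modal d (var 0) ∈ Φ)
    {φ : MF} (hφΦ : φ ∈ Φ) (hφ : φ.isProp) (hxyy : ∀ x y, φ.propEval (assign3 x y y) = x)
    (hcex : ∃ x y z, φ.propEval (assign3 x y z) ≠ x) :
    ¬ ∃ E : Set (FPModel × Bool), E.Finite ∧ uniqCharMF (var 0) (fragSimple Φ {0}) E := by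
  classical
  rintro ⟨E, hE, hfits, huniq⟩
  obtain ⟨N, hN, hstable⟩ := exists_sat_modal_iterate_stable d (var 0) (hE.image Prod.fst)
  set A := (modal d)^[N] (var 0)
  set B := (modal d)^[N] A
  have hA : MLFrag Φ A := MLFrag.modal_iterate hd (.var 0) N
  have hψ : φ.subst (assign3 (var 0) A B) ∈ fragSimple Φ {0} := by
    refine ⟨.app φ hφΦ _ fun n => ?_, vars_subst_subset fun n => ?_⟩
    · unfold assign3
      split_ifs
      exacts [hA, MLFrag.modal_iterate hd hA N, .var 0]
    · unfold assign3
      split_ifs <;> simp only [B, A, vars_modal_iterate, vars, subset_refl]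
  refine not_KequivMF_var_subst_assign3 hφ hcex d hN (huniq _ hψ fun e he => ?_)
  have hAB : sat e.1.R e.1.V B e.1.pt = sat e.1.R e.1.V A e.1.pt :=
    congrFun (hstable e.1 ⟨e, he, rfl⟩) e.1.pt
  refine Iff.trans ?_ (hfits e he)
  have hx := (decide_eq_true_iff (p := msatMF e.1 (var 0))).symm
  have hy := (decide_eq_true_iff (p := sat e.1.R e.1.V A e.1.pt)).symm
  have hz : sat e.1.R e.1.V B e.1.pt ↔ decide (sat e.1.R e.1.V A e.1.pt) = true := by
    rw [hAB]
    exact hy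
  rw [msatMF, sat_subst_assign3 hφ hx hy hz, hxyy]
  exact hx.symm

theorem modal_var_mem_MOgen {hd hb : Bool} (h : hd ≠ hb) (O : Set BFun) :
    modal hd (var 0) ∈ MOgen hd hb O := by
  cases hd <;> cases hb <;> simp_all [MOgen, modal]

def MF.xor (a b : MF) : MF := .or (.and a (.neg b)) (.and (.neg a) b)

theorem MF.propEval_xor (v : ℕ → Bool) (a b : MF) :
    (a.xor b).propEval v = (a.propEval v).xor (b.propEval v) := by
  simp only [MF.xor, propEval]
  cases a.propEval v <;> cases b.propEval v <;> rfl

def phi3Xor : MF := (var 0).xor ((var 1).xor (var 2))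
def phiOxor : MF := .or (var 0) ((var 1).xor (var 2))
def phiAimp : MF := .and (var 0) (.or (.neg (var 1)) (var 2))

theorem phi3Xor_definesBF : definesBF phi3Xor bf3Xor :=
  ⟨by simp [phi3Xor, MF.xor, isProp], fun v => by simp [phi3Xor, propEval_xor, propEval, bf3Xor]⟩

theorem phiOxor_definesBF : definesBF phiOxor bfOxor :=
  ⟨by simp [phiOxor, MF.xor, isProp], fun v => by simp [phiOxor, propEval_xor, propEval, bfOxor]⟩

theorem phiAimp_definesBF : definesBF phiAimp bfAimp :=
  ⟨by simp [phiAimp, isProp], fun _ => rfl⟩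

theorem exists_mem_MOgen_cancels_equal_args {O : Set BFun}
    (hO : O ∈ ({{bf3Xor}, {bfOxor}, {bfAimp}} : Set (Set BFun))) (hd hb : Bool) :
    ∃ φ ∈ MOgen hd hb O, φ.isProp ∧ (∀ x y, φ.propEval (assign3 x y y) = x) ∧
      ∃ x y z, φ.propEval (assign3 x y z) ≠ x := by
  rcases hO with rfl | rfl | rfl
  · exact ⟨phi3Xor, .inr (.inr ⟨_, rfl, phi3Xor_definesBF⟩), phi3Xor_definesBF.1, by decide,
      by decide⟩
  · exact ⟨phiOxor, .inr (.inr ⟨_, rfl, phiOxor_definesBF⟩), phiOxor_definesBF.1, by decide,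
      by decide⟩
  · exact ⟨phiAimp, .inr (.inr ⟨_, rfl, phiAimp_definesBF⟩), phiAimp_definesBF.1, by decide,
      by decide⟩

theorem stmt17 :
    ∀ O ∈ ({{bf3Xor}, {bfOxor}, {bfAimp}} : Set (Set BFun)),
    ∀ hd hb : Bool, hd ≠ hb →
      (¬ ∃ E : Set (FPModel × Bool), E.Finite ∧
        uniqCharMF (MF.var 0) (fragMO hd hb O {0}) E) ∧
      ¬ (∀ φ ∈ fragMO hd hb O {0}, ∃ E : Set (FPModel × Bool), E.Finite ∧
        uniqCharMF φ (fragMO hd hb O {0}) E) := by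
  intro O hO hd hb hne
  obtain ⟨φ, hφΦ, hφ, hxyy, hcex⟩ := exists_mem_MOgen_cancels_equal_args hO hd hb
  have hvar := not_exists_finite_uniqCharMF_var (modal_var_mem_MOgen hne O) hφΦ hφ hxyy hcex
  exact ⟨hvar, fun hall => hvar (hall (var 0) ⟨.var 0, subset_refl _⟩)⟩
end
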